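/- arXiv:1206.2792 — 4 statements merged into one kernel-verified Lean document; each statement's English description precedes it below -/
import Mathlib

section
/- For every real x ≥ 1, |∑_{n ≤ x} μ(n)/n| ≤ 1. -/
/-!
Möbius inversion gives `∑_{n ≤ N} μ(n) ⌊N/n⌋ = 1`. Hence `N · ∑_{n ≤ N} μ(n)/n` differs from `1`
by `∑_{n ≤ N} μ(n) {N/n}`, whose term `n = 1` vanishes and whose other `N - 1` terms have
absolute value less than `1`; so `N · |∑_{n ≤ N} μ(n)/n| ≤ N`.
-/

open Finset ArithmeticFunction

open scoped ArithmeticFunction.Moebius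

theorem ArithmeticFunction.sum_Icc_moebius_mul_div_eq_one {R : Type*} [Ring R] {N : ℕ}
    (hN : N ≠ 0) : ∑ n ∈ Icc 1 N, (μ n : R) * (N / n : ℕ) = 1 := by
  have h := sum_Ioc_mul_zeta_eq_sum (μ : ArithmeticFunction R) N
  rw [← Icc_add_one_left_eq_Ioc, zero_add, coe_moebius_mul_coe_zeta] at h
  simpa [one_apply, Nat.one_le_iff_ne_zero.2 hN] using h.symm

theorem ArithmeticFunction.natCast_mul_sum_Icc_moebius_div {K : Type*} [Field K] {N : ℕ}
    (hN : N ≠ 0) :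
    (N : K) * ∑ n ∈ Icc 1 N, (μ n : K) / n =
      1 + ∑ n ∈ Ioc 1 N, (μ n : K) * ((N : K) / n - (N / n : ℕ)) := by
  have hsplit : (N : K) * ∑ n ∈ Icc 1 N, (μ n : K) / n =
      ∑ n ∈ Icc 1 N, (μ n : K) * (N / n : ℕ) +
        ∑ n ∈ Icc 1 N, (μ n : K) * ((N : K) / n - (N / n : ℕ)) := by
    rw [mul_sum, ← sum_add_distrib]
    exact sum_congr rfl fun n _ ↦ by ring
  rw [hsplit, sum_Icc_moebius_mul_div_eq_one hN, Icc_eq_cons_Ioc (Nat.one_le_iff_ne_zero.2 hN),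
    sum_cons]
  simp

section Floor

variable {K : Type*} [Field K] [LinearOrder K] [IsStrictOrderedRing K] [FloorSemiring K]

theorem Nat.abs_cast_div_sub_cast_div_lt_one (m n : ℕ) : |(m : K) / n - (m / n : ℕ)| < 1 := by
  rw [← Nat.floor_div_eq_div (K := K), abs_of_nonneg (sub_nonneg.2 (Nat.floor_le (by positivity))),
    sub_lt_iff_lt_add']
  exact Nat.lt_floor_add_one _

theorem ArithmeticFunction.abs_sum_moebius_mul_div_sub_div_le_card (s : Finset ℕ) (m : ℕ) :
    |∑ n ∈ s, (μ n : K) * ((m : K) / n - (m / n : ℕ))| ≤ #s := by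
  calc |∑ n ∈ s, (μ n : K) * ((m : K) / n - (m / n : ℕ))|
      ≤ ∑ n ∈ s, |(μ n : K)| * |(m : K) / n - (m / n : ℕ)| :=
        (abs_sum_le_sum_abs _ s).trans_eq (sum_congr rfl fun _ _ ↦ abs_mul _ _)
    _ ≤ ∑ _n ∈ s, (1 : K) :=
        sum_le_sum fun n _ ↦ mul_le_one₀ (mod_cast abs_moebius_le_one) (abs_nonneg _)
          (Nat.abs_cast_div_sub_cast_div_lt_one m n).le
    _ = #s := by simp

theorem ArithmeticFunction.abs_sum_Icc_moebius_div_le_one (N : ℕ) :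
    |∑ n ∈ Icc 1 N, (μ n : K) / n| ≤ 1 := by
  rcases Nat.eq_zero_or_pos N with rfl | hN
  · simp
  have hNpos : (0 : K) < N := by exact_mod_cast hN
  refine le_of_mul_le_mul_left ?_ hNpos
  calc (N : K) * |∑ n ∈ Icc 1 N, (μ n : K) / n|
      = |1 + ∑ n ∈ Ioc 1 N, (μ n : K) * ((N : K) / n - (N / n : ℕ))| := by
        rw [← natCast_mul_sum_Icc_moebius_div hN.ne', abs_mul, Nat.abs_cast]
    _ ≤ 1 + #(Ioc 1 N) := by
        grw [abs_add_le, abs_one, abs_sum_moebius_mul_div_sub_div_le_card]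
    _ = N * 1 := by
        rw [Nat.card_Ioc, Nat.cast_sub hN]
        ring

end Floor

theorem moebius_over_n_le_one_general (x : ℝ) :
    |∑ n ∈ Finset.Icc 1 ⌊x⌋₊, (ArithmeticFunction.moebius n : ℝ) / n| ≤ 1 :=
  abs_sum_Icc_moebius_div_le_one ⌊x⌋₊

theorem moebius_over_n_le_one (x : ℝ) (hx : 1 ≤ x) :
    |∑ n ∈ Finset.Icc 1 ⌊x⌋₊, (ArithmeticFunction.moebius n : ℝ) / n| ≤ 1 :=
  moebius_over_n_le_one_general x
end

section
/- ∑_{n ≤ x} {x/n} = (1 − γ)x + O(√x), where γ is the Euler–Mascheroni constant; i.e., there is a constant C with |∑_{n ≤ x} {x/n} − (1−γ)x| ≤ C√x for all x ≥ 1. -/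
/-! With `M = ⌊x⌋` we have `{x/n} = x/n - ⌊M/n⌋`, so the sum is `x H_M - ∑_{n ≤ M} ⌊M/n⌋`.
Dirichlet's hyperbola method with `K = ⌊√x⌋` turns the divisor sum into
`2 ∑_{n ≤ K} ⌊M/n⌋ - K²`, and the short sum is again `x H_K - ∑_{n ≤ K} {x/n}`. Hence the sum
equals `x (H_M - 2 H_K) + K² + O(K)`; then `H_n = log n + γ + O(1/n)`,
`log M - 2 log K = O(1/K)` and `K² = x + O(√x)` leave `(1 - γ) x + O(√x)`. -/

open Finset Real

namespace Nat

lemma filter_Ioc_mul_le {b : ℕ} (hb : 0 < b) (K N M : ℕ) :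
    {a ∈ Ioc K N | a * b ≤ M} = Ioc K (min N (M / b)) := by
  ext a
  simp [Nat.le_div_iff_mul_le hb, and_assoc]

/-- Both sides count the lattice points `(a, b)` with `ab ≤ M` and `b ≤ √M`. -/
lemma sum_Ioc_sqrt_div_add_sqrt_mul_sqrt (M : ℕ) :
    ∑ a ∈ Ioc M.sqrt M, M / a + M.sqrt * M.sqrt = ∑ b ∈ Ioc 0 M.sqrt, M / b := by
  set K := M.sqrt
  have hbelow : ∀ a ∈ Ioc K M, M / a = #{b ∈ Ioc 0 K | b * a ≤ M} := by
    intro a ha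
    have hKa := (mem_Ioc.mp ha).1
    have hdiv : M / a ≤ K := Nat.lt_succ_iff.mp <|
      (Nat.div_le_div_left hKa K.succ_pos).trans_lt (Nat.div_lt_of_lt_mul (Nat.lt_succ_sqrt M))
    rw [filter_Ioc_mul_le (by omega), min_eq_right hdiv, Nat.card_Ioc, Nat.sub_zero]
  have habove : ∀ b ∈ Ioc 0 K, #{a ∈ Ioc K M | b * a ≤ M} + K = M / b := by
    intro b hb
    obtain ⟨hb₀, hbK⟩ := mem_Ioc.mp hb
    have hdiv : K ≤ M / b :=
      (Nat.le_div_iff_mul_le hb₀).mpr ((Nat.mul_le_mul_left K hbK).trans (Nat.sqrt_le M))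
    simp_rw [Nat.mul_comm b]
    rw [filter_Ioc_mul_le hb₀, min_eq_right (Nat.div_le_self M b), Nat.card_Ioc,
      Nat.sub_add_cancel hdiv]
  rw [sum_congr rfl hbelow, ← sum_congr rfl habove, sum_add_distrib, sum_const, Nat.card_Ioc,
    Nat.sub_zero, smul_eq_mul]
  congr 1
  exact sum_card_bipartiteAbove_eq_sum_card_bipartiteBelow (fun a b => b * a ≤ M)

lemma sum_Icc_div_add_sqrt_mul_sqrt (M : ℕ) :
    ∑ n ∈ Icc 1 M, M / n + M.sqrt * M.sqrt = 2 * ∑ n ∈ Icc 1 M.sqrt, M / n := by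
  have hIcc (n : ℕ) : Icc 1 n = Ioc 0 n := Icc_add_one_left_eq_Ioc 0 n
  rw [hIcc, hIcc, ← sum_Ioc_consecutive _ (Nat.zero_le _) (Nat.sqrt_le_self M), add_assoc,
    sum_Ioc_sqrt_div_add_sqrt_mul_sqrt, two_mul]

end Nat

lemma Int.fract_div_natCast_eq_sub {k : Type*} [Field k] [LinearOrder k] [IsStrictOrderedRing k]
    [FloorRing k] {a : k} (ha : 0 ≤ a) (n : ℕ) :
    Int.fract (a / n) = a / n - (⌊a⌋₊ / n : ℕ) := by
  rw [Int.fract, ← natCast_floor_eq_intCast_floor (by positivity), Nat.floor_div_natCast]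

lemma sum_fract_mem_Icc {ι k : Type*} [Ring k] [LinearOrder k] [IsOrderedRing k] [FloorRing k]
    (s : Finset ι) (f : ι → k) :
    ∑ i ∈ s, Int.fract (f i) ∈ Set.Icc 0 (#s : k) := by
  refine ⟨sum_nonneg fun i _ => Int.fract_nonneg _, ?_⟩
  simpa using sum_le_card_nsmul s _ 1 fun i _ => (Int.fract_lt_one (f i)).le

lemma div_natFloor_le_two {k : Type*} [Field k] [LinearOrder k] [IsStrictOrderedRing k]
    [FloorSemiring k] {a : k} (ha : 1 ≤ a) : a / ⌊a⌋₊ ≤ 2 := by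
  have hfloor : (1 : k) ≤ ⌊a⌋₊ := by exact_mod_cast (Nat.one_le_floor_iff a).mpr ha
  rw [div_le_iff₀ (by positivity)]
  linarith [Nat.lt_floor_add_one a]

namespace Real

lemma nat_floor_real_sqrt_eq_nat_sqrt_floor (x : ℝ) : ⌊√x⌋₊ = Nat.sqrt ⌊x⌋₊ := by
  rcases lt_or_ge x 0 with hx | hx
  · simp [Nat.floor_of_nonpos hx.le, sqrt_eq_zero'.mpr hx.le]
  have hsq := sq_sqrt hx
  refine Nat.eq_sqrt.mpr ⟨Nat.le_floor ?_, (Nat.floor_lt' (by positivity)).mpr ?_⟩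
  · have := Nat.floor_le (sqrt_nonneg x)
    push_cast
    nlinarith
  · have := Nat.lt_floor_add_one √x
    push_cast
    nlinarith [sqrt_nonneg x]

lemma sq_natFloor_sqrt_mem_Icc {x : ℝ} (hx : 0 ≤ x) :
    (⌊√x⌋₊ : ℝ) ^ 2 ∈ Set.Icc (x - 2 * √x) x := by
  have hsq := sq_sqrt hx
  have := Nat.floor_le (sqrt_nonneg x)
  have := Nat.lt_floor_add_one √x
  constructor <;> nlinarith

lemma div_natFloor_sqrt_le_two_mul_sqrt {x : ℝ} (hx : 1 ≤ x) : x / ⌊√x⌋₊ ≤ 2 * √x := by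
  have h := mul_le_mul_of_nonneg_left (div_natFloor_le_two (one_le_sqrt.mpr hx)) (sqrt_nonneg x)
  rwa [mul_div_assoc', mul_self_sqrt (by linarith), mul_comm] at h

lemma log_sub_two_mul_log_sqrt_mem_Icc {n : ℕ} (hn : n ≠ 0) :
    log n - 2 * log (Nat.sqrt n) ∈ Set.Icc (0 : ℝ) (3 / Nat.sqrt n) := by
  have hk : (1 : ℝ) ≤ Nat.sqrt n := by exact_mod_cast Nat.sqrt_pos.mpr (Nat.pos_of_ne_zero hn)
  have hkn : (Nat.sqrt n : ℝ) ^ 2 ≤ n := by exact_mod_cast Nat.sqrt_le' n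
  have hnk : (n : ℝ) < (Nat.sqrt n + 1) ^ 2 := by exact_mod_cast Nat.lt_succ_sqrt' n
  set k : ℝ := ((Nat.sqrt n : ℕ) : ℝ)
  have hk2 : 0 < k ^ 2 := by positivity
  have hlog : log n - 2 * log k = log (n / k ^ 2) := by
    rw [log_div (by positivity) hk2.ne', log_pow, Nat.cast_ofNat]
  rw [hlog]
  refine ⟨log_nonneg ((one_le_div hk2).mpr hkn), (log_le_sub_one_of_pos (by positivity)).trans ?_⟩
  rw [div_sub_one hk2.ne', div_le_div_iff₀ hk2 (by positivity)]
  nlinarith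

lemma harmonic_sub_log_sub_eulerMascheroniConstant_mem_Icc {n : ℕ} (hn : n ≠ 0) :
    (harmonic n : ℝ) - log n - eulerMascheroniConstant ∈ Set.Icc 0 (n : ℝ)⁻¹ := by
  have hlower := eulerMascheroniConstant_lt_eulerMascheroniSeq' n
  have hupper := eulerMascheroniSeq_lt_eulerMascheroniConstant n
  rw [eulerMascheroniSeq', if_neg hn] at hlower
  rw [eulerMascheroniSeq] at hupper
  have hn' : (0 : ℝ) < n := by positivity
  have hlog : log (n + 1) - log n ≤ (n : ℝ)⁻¹ := by
    rw [← log_div (by positivity) hn'.ne']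
    convert log_le_sub_one_of_pos (show (0 : ℝ) < (n + 1) / n by positivity) using 1
    field_simp
    ring
  constructor <;> linarith

end Real

lemma sum_Icc_fract_div_eq_mul_harmonic_sub {x : ℝ} (hx : 0 ≤ x) (N : ℕ) :
    ∑ n ∈ Icc 1 N, Int.fract (x / n) = x * harmonic N - ∑ n ∈ Icc 1 N, ((⌊x⌋₊ / n : ℕ) : ℝ) := by
  rw [sum_congr rfl fun n _ => Int.fract_div_natCast_eq_sub hx n, sum_sub_distrib,
    harmonic_eq_sum_Icc, Rat.cast_sum, mul_sum]
  simp only [Rat.cast_inv, Rat.cast_natCast, div_eq_mul_inv]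

lemma sum_Icc_fract_div_eq_hyperbola {x : ℝ} (hx : 0 ≤ x) :
    ∑ n ∈ Icc 1 ⌊x⌋₊, Int.fract (x / n) = x * (harmonic ⌊x⌋₊ - 2 * harmonic ⌊√x⌋₊) +
      ⌊√x⌋₊ ^ 2 + 2 * ∑ n ∈ Icc 1 ⌊√x⌋₊, Int.fract (x / n) := by
  have hhyp := congrArg (Nat.cast : ℕ → ℝ) (Nat.sum_Icc_div_add_sqrt_mul_sqrt ⌊x⌋₊)
  push_cast at hhyp
  rw [nat_floor_real_sqrt_eq_nat_sqrt_floor, sum_Icc_fract_div_eq_mul_harmonic_sub hx,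
    sum_Icc_fract_div_eq_mul_harmonic_sub hx]
  linear_combination -hhyp

theorem fract_sum_asymptotic :
    ∃ C : ℝ, ∀ x : ℝ, 1 ≤ x →
      |(∑ n ∈ Finset.Icc 1 ⌊x⌋₊, Int.fract (x / n)) -
          (1 - Real.eulerMascheroniConstant) * x| ≤ C * Real.sqrt x := by
  refine ⟨10, fun x hx => ?_⟩
  have hx₀ : 0 ≤ x := by linarith
  have hM : ⌊x⌋₊ ≠ 0 := (Nat.floor_pos.mpr hx).ne'
  have hs : 1 ≤ √x := one_le_sqrt.mpr hx
  have hK : ⌊√x⌋₊ ≠ 0 := (Nat.floor_pos.mpr hs).ne'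
  obtain ⟨hA₀, hA₁⟩ := harmonic_sub_log_sub_eulerMascheroniConstant_mem_Icc hM
  obtain ⟨hB₀, hB₁⟩ := harmonic_sub_log_sub_eulerMascheroniConstant_mem_Icc hK
  obtain ⟨hL₀, hL₁⟩ := nat_floor_real_sqrt_eq_nat_sqrt_floor x ▸ log_sub_two_mul_log_sqrt_mem_Icc hM
  obtain ⟨hE₀, hE₁⟩ := sum_fract_mem_Icc (Icc 1 ⌊√x⌋₊) fun n : ℕ => x / n
  obtain ⟨hsq₀, hsq₁⟩ := sq_natFloor_sqrt_mem_Icc hx₀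
  have hxM := div_natFloor_le_two hx
  have hxK := div_natFloor_sqrt_le_two_mul_sqrt hx
  rw [Nat.card_Icc, add_tsub_cancel_right] at hE₁
  -- `linarith` would treat `x / K` and `x * K⁻¹` as unrelated atoms
  simp only [div_eq_mul_inv] at hL₁ hxM hxK
  rw [sum_Icc_fract_div_eq_hyperbola hx₀, abs_le]
  constructor <;> linarith [Nat.floor_le (sqrt_nonneg x), mul_le_mul_of_nonneg_left hA₁ hx₀,
    mul_le_mul_of_nonneg_left hB₁ hx₀, mul_le_mul_of_nonneg_left hL₁ hx₀, mul_nonneg hx₀ hA₀,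
    mul_nonneg hx₀ hB₀, mul_nonneg hx₀ hL₀]
end

section
/- ∑_{n ≤ x} φ(n)/n = (6/π²)x + O(log x); explicitly, there is an absolute constant C such that |∑_{n ≤ x} φ(n)/n − (6/π²)x| ≤ C·(log x + 1) for all x ≥ 1. -/
/-!
Since `φ = μ * id`, we have `φ(n)/n = ∑_{d ∣ n} μ(d)/d`, and exchanging the order of summation
gives `∑_{n ≤ x} φ(n)/n = ∑_{d ≤ x} (μ(d)/d) ⌊x/d⌋`. Replacing `⌊x/d⌋` by `x/d` costs at most
`∑_{d ≤ x} 1/d ≤ 1 + log x`, and completing `x ∑_{d ≤ x} μ(d)/d²` to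
`x ∑_d μ(d)/d² = x/ζ(2) = 6x/π²` costs at most `x ∑_{d > x} 1/d² ≤ 2`.
-/

open Finset Real ArithmeticFunction
open scoped ArithmeticFunction.Moebius LSeries.notation

theorem Nat.cast_totient_div_self_eq_sum_moebius_div {K : Type*} [Field K] [CharZero K] {n : ℕ}
    (hn : n ≠ 0) : (n.totient : K) / n = ∑ d ∈ n.divisors, (μ d : K) / d := by
  have hφ : ∑ p ∈ n.divisorsAntidiagonal, (μ p.1 : K) * p.2 = n.totient :=
    (sum_eq_iff_sum_mul_moebius_eq (f := fun d ↦ (d.totient : K)) (g := fun d ↦ (d : K))).mp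
      (fun m _ ↦ mod_cast Nat.sum_totient m) n (Nat.pos_of_ne_zero hn)
  rw [← hφ, sum_div, ← Nat.sum_divisorsAntidiagonal fun a _ ↦ (μ a : K) / a]
  refine sum_congr rfl fun p hp ↦ ?_
  obtain ⟨rfl, -⟩ := Nat.mem_divisorsAntidiagonal.mp hp
  have hp₂ : (p.2 : K) ≠ 0 := by simp_all
  push_cast
  field_simp

theorem Nat.sum_Icc_sum_divisors_eq_sum_div_smul {M : Type*} [AddCommMonoid M] (f : ℕ → M)
    (N : ℕ) : ∑ n ∈ Icc 1 N, ∑ d ∈ n.divisors, f d = ∑ d ∈ Icc 1 N, (N / d) • f d := by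
  rw [sum_comm' (t' := Icc 1 N) (s' := fun d ↦ {n ∈ Ioc 0 N | d ∣ n})]
  · refine sum_congr rfl fun d _ ↦ ?_
    rw [sum_const, Nat.Ioc_filter_dvd_card_eq_div]
  · intro n d
    simp only [mem_Icc, Nat.mem_divisors, mem_filter, mem_Ioc]
    constructor
    · rintro ⟨⟨hn, hnN⟩, hdn, -⟩
      exact ⟨⟨⟨hn, hnN⟩, hdn⟩, Nat.pos_of_dvd_of_pos hdn hn, (Nat.le_of_dvd hn hdn).trans hnN⟩
    · rintro ⟨⟨⟨hn, hnN⟩, hdn⟩, -⟩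
      exact ⟨⟨hn, hnN⟩, hdn, hn.ne'⟩

theorem sum_Icc_totient_div_self_eq_sum_moebius_div_mul_floor (x : ℝ) :
    ∑ n ∈ Icc 1 ⌊x⌋₊, (n.totient : ℝ) / n = ∑ d ∈ Icc 1 ⌊x⌋₊, (μ d : ℝ) / d * ⌊x / d⌋₊ := by
  rw [sum_congr rfl fun n hn ↦
      Nat.cast_totient_div_self_eq_sum_moebius_div (Nat.one_le_iff_ne_zero.mp (mem_Icc.mp hn).1),
    Nat.sum_Icc_sum_divisors_eq_sum_div_smul]
  exact sum_congr rfl fun d _ ↦ by rw [Nat.floor_div_natCast, nsmul_eq_mul, mul_comm]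

theorem abs_sum_mul_floor_div_sub_le_harmonic {f : ℕ → ℝ} (hf : ∀ d, |f d| ≤ 1) {x : ℝ}
    (hx : 0 ≤ x) :
    |∑ d ∈ Icc 1 ⌊x⌋₊, f d / d * ⌊x / d⌋₊ - x * ∑ d ∈ Icc 1 ⌊x⌋₊, f d / d ^ 2| ≤
      harmonic ⌊x⌋₊ := by
  rw [mul_sum, ← sum_sub_distrib, harmonic_eq_sum_Icc]
  push_cast
  refine (abs_sum_le_sum_abs _ _).trans (sum_le_sum fun d hd ↦ ?_)
  have hd : (0 : ℝ) < d := Nat.cast_pos.mpr (mem_Icc.mp hd).1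
  calc |f d / d * ⌊x / d⌋₊ - x * (f d / d ^ 2)| = |f d| / d * |⌊x / d⌋₊ - x / d| := by
        rw [← abs_of_pos hd, ← abs_div, ← abs_mul, abs_of_pos hd]
        congr 1
        field_simp
    _ ≤ 1 / d * 1 := by
        gcongr
        · exact hf d
        · exact Nat.abs_floor_sub_le (by positivity)
    _ = (d : ℝ)⁻¹ := by rw [mul_one, one_div]

theorem hasSum_moebius_div_sq : HasSum (fun d : ℕ ↦ (μ d : ℝ) / d ^ 2) (6 / π ^ 2) := by
  have h2 : 1 < (2 : ℂ).re := by norm_num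
  have hL : LSeries ↗μ 2 = 6 / π ^ 2 := by
    have h := LSeries_zeta_mul_Lseries_moebius h2
    rw [LSeries_zeta_eq_riemannZeta h2, riemannZeta_two] at h
    have hπ : (π : ℂ) ≠ 0 := Complex.ofReal_ne_zero.mpr pi_ne_zero
    field_simp at h ⊢
    linear_combination h
  have h := Complex.hasSum_re (LSeriesSummable_moebius_iff.mpr h2).LSeriesHasSum
  rw [hL] at h
  convert h using 1
  · ext d
    rcases eq_or_ne d 0 with rfl | hd
    · simp
    · rw [LSeries.term_of_ne_zero hd, Complex.cpow_ofNat]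
      norm_cast
  · norm_cast

theorem abs_sub_sum_range_le_of_abs_le_inv_sq {f : ℕ → ℝ} {a : ℝ} (hf : HasSum f a) {N : ℕ}
    (hbound : ∀ n > N, |f n| ≤ ((n : ℝ) ^ 2)⁻¹) :
    |a - ∑ n ∈ range (N + 1), f n| ≤ 2 / ((N : ℝ) + 1) := by
  refine le_of_tendsto (hf.tendsto_sum_nat.sub_const _).abs ?_
  filter_upwards [Filter.eventually_ge_atTop (N + 1)] with M hM
  rw [← sum_Ico_eq_sub f hM, Ico_add_one_left_eq_Ioo]
  calc |∑ n ∈ Ioo N M, f n| ≤ ∑ n ∈ Ioo N M, |f n| := abs_sum_le_sum_abs _ _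
    _ ≤ ∑ n ∈ Ioo N M, ((n : ℝ) ^ 2)⁻¹ := sum_le_sum fun n hn ↦ hbound n (mem_Ioo.mp hn).1
    _ ≤ 2 / (N + 1) := sum_Ioo_inv_sq_le N M

theorem abs_sub_sum_moebius_div_sq_le (N : ℕ) :
    |6 / π ^ 2 - ∑ d ∈ Icc 1 N, (μ d : ℝ) / d ^ 2| ≤ 2 / ((N : ℝ) + 1) := by
  have h := abs_sub_sum_range_le_of_abs_le_inv_sq hasSum_moebius_div_sq (N := N) fun d _ ↦ by
    rw [abs_div, abs_of_nonneg (by positivity : (0 : ℝ) ≤ d ^ 2), div_eq_mul_inv]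
    exact mul_le_of_le_one_left (by positivity) (mod_cast abs_moebius_le_one)
  rwa [sum_range_eq_add_Ico _ (by omega : 0 < N + 1), Ico_add_one_right_eq_Icc, Nat.cast_zero,
    ArithmeticFunction.map_zero, Int.cast_zero, zero_div, zero_add] at h

theorem phi_over_n_asymptotic :
    ∃ C : ℝ, ∀ x : ℝ, 1 ≤ x →
      |(∑ n ∈ Finset.Icc 1 ⌊x⌋₊, (Nat.totient n : ℝ) / n) - (6 / Real.pi ^ 2) * x| ≤
        C * (Real.log x + 1) := by
  refine ⟨3, fun x hx ↦ ?_⟩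
  set S := ∑ d ∈ Icc 1 ⌊x⌋₊, (μ d : ℝ) / d * ⌊x / d⌋₊
  set P := ∑ d ∈ Icc 1 ⌊x⌋₊, (μ d : ℝ) / d ^ 2
  have hmain : |S - x * P| ≤ 1 + log x :=
    (abs_sum_mul_floor_div_sub_le_harmonic (fun d ↦ mod_cast abs_moebius_le_one)
      (by linarith)).trans (harmonic_floor_le_one_add_log x hx)
  have htail : x * |P - 6 / π ^ 2| ≤ 2 :=
    calc x * |P - 6 / π ^ 2| ≤ x * (2 / (⌊x⌋₊ + 1)) := by
          rw [abs_sub_comm]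
          exact mul_le_mul_of_nonneg_left (abs_sub_sum_moebius_div_sq_le _) (by linarith)
      _ ≤ 2 := by
          rw [mul_div_assoc', div_le_iff₀ (by positivity)]
          nlinarith [Nat.lt_floor_add_one x]
  calc |∑ n ∈ Icc 1 ⌊x⌋₊, (n.totient : ℝ) / n - 6 / π ^ 2 * x|
      = |(S - x * P) + x * (P - 6 / π ^ 2)| := by
        rw [sum_Icc_totient_div_self_eq_sum_moebius_div_mul_floor]; congr 1; ring
    _ ≤ (1 + log x) + 2 := by
        grw [abs_add_le, hmain, abs_mul, abs_of_nonneg (by linarith : 0 ≤ x), htail]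
    _ ≤ 3 * (log x + 1) := by linarith [log_nonneg hx]
end

section
/- ∑_{n ≤ x} φ(n) = (3/π²)x² + O(x log x); i.e., there is an absolute constant C with |∑_{n ≤ x} φ(n) − (3/π²)x²| ≤ C·x·(log x + 1) for all x ≥ 1. -/
/-!
Since `φ = μ * id`, we have `∑_{n ≤ x} φ(n) = ∑_{d ≤ x} μ(d) T(x/d)` with `T(y) = ∑_{m ≤ y} m`,
and `T(y) = y²/2 + O(y)` for `y ≥ 1`. The main terms add up to `(x²/2) ∑_{d ≤ x} μ(d)/d²`, which is
`(x²/2) (1/ζ(2) + O(1/x)) = (3/π²) x² + O(x)`; the errors add up to `O(x ∑_{d ≤ x} 1/d) = O(x log x)`.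
-/

open Finset ArithmeticFunction
open scoped ArithmeticFunction.Moebius

theorem Nat.cast_totient_eq_sum_moebius_mul {R : Type*} [Ring R] {n : ℕ} (hn : 0 < n) :
    (n.totient : R) = ∑ p ∈ n.divisorsAntidiagonal, (μ p.1 : R) * p.2 :=
  ((sum_eq_iff_sum_mul_moebius_eq (f := fun m => (m.totient : R)) (g := Nat.cast)).mp
    (fun m _ => by exact_mod_cast congrArg Nat.cast m.sum_totient) n hn).symm

theorem sum_Icc_totient_eq_sum_moebius_mul {R : Type*} [Ring R] (N : ℕ) :
    ∑ n ∈ Icc 1 N, (n.totient : R) = ∑ d ∈ Icc 1 N, (μ d : R) * ∑ m ∈ Icc 1 (N / d), (m : R) := by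
  have h := sum_Ioc_mul_eq_sum_sum (μ : ArithmeticFunction R)
    ((ArithmeticFunction.id : ArithmeticFunction ℕ) : ArithmeticFunction R) N
  simp only [mul_apply, intCoe_apply, natCoe_apply, id_apply] at h
  -- `Icc 1 N` and `Ioc 0 N` are the same finset by `rfl`
  refine (sum_congr rfl fun n hn => ?_).trans h
  exact Nat.cast_totient_eq_sum_moebius_mul (mem_Icc.mp hn).1

theorem sum_Icc_natCast_eq {R : Type*} [Field R] [CharZero R] (n : ℕ) :
    ∑ m ∈ Icc 1 n, (m : R) = n * (n + 1) / 2 := by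
  induction n with
  | zero => simp
  | succ n ih =>
    rw [sum_Icc_succ_top (by omega), ih]
    push_cast
    ring

theorem abs_sum_Icc_floor_sub_sq_div_two_le {y : ℝ} (hy : 1 ≤ y) :
    |∑ m ∈ Icc 1 ⌊y⌋₊, (m : ℝ) - y ^ 2 / 2| ≤ y := by
  have h₁ := Nat.floor_le (zero_le_one.trans hy)
  have h₂ := Nat.lt_floor_add_one y
  rw [sum_Icc_natCast_eq, abs_le]
  constructor <;> nlinarith

theorem abs_tsum_sub_sum_Icc_div_sq_le {f : ℕ → ℝ} (hf : ∀ d, |f d| ≤ 1) (N : ℕ) :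
    |∑' d, f d / d ^ 2 - ∑ d ∈ Icc 1 N, f d / d ^ 2| ≤ 2 / (N + 1) := by
  have hle : ∀ d, |f d / d ^ 2| ≤ ((d : ℝ) ^ 2)⁻¹ := fun d => by
    rw [abs_div, abs_of_nonneg (sq_nonneg (d : ℝ)), div_eq_mul_inv]
    exact mul_le_of_le_one_left (inv_nonneg.mpr (sq_nonneg _)) (hf d)
  have hsum : Summable fun d : ℕ => f d / d ^ 2 :=
    .of_norm_bounded (Real.summable_nat_pow_inv.mpr one_lt_two) hle
  -- the term `d = 0` is `f 0 / 0 = 0`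
  have hIcc : ∑ d ∈ range (N + 1), f d / d ^ 2 = ∑ d ∈ Icc 1 N, f d / d ^ 2 := by
    rw [range_eq_Ico, sum_eq_sum_Ico_succ_bot N.succ_pos, Nat.cast_zero, zero_pow two_ne_zero,
      div_zero, zero_add, Nat.succ_eq_add_one, Ico_add_one_right_eq_Icc]
  rw [← hIcc]
  refine le_of_tendsto ((hsum.hasSum.tendsto_sum_nat.sub_const _).abs)
    (Filter.eventually_atTop.mpr ⟨N + 1, fun M hM => ?_⟩)
  rw [← sum_range_add_sum_Ico _ hM, add_sub_cancel_left, Ico_add_one_left_eq_Ioo]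
  calc |∑ d ∈ Ioo N M, f d / d ^ 2| ≤ ∑ d ∈ Ioo N M, ((d : ℝ) ^ 2)⁻¹ :=
        (abs_sum_le_sum_abs _ _).trans (sum_le_sum fun d _ => hle d)
    _ ≤ 2 / (N + 1) := sum_Ioo_inv_sq_le N M

theorem LSeries_moebius_two : LSeries (fun n => (μ n : ℂ)) 2 = 6 / (Real.pi : ℂ) ^ 2 := by
  have h := LSeries_zeta_mul_Lseries_moebius (s := 2) (by norm_num)
  rw [LSeries_zeta_eq_riemannZeta (by norm_num), riemannZeta_two] at h
  have hπ : (Real.pi : ℂ) ≠ 0 := Complex.ofReal_ne_zero.mpr Real.pi_ne_zero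
  field_simp
  linear_combination 6 * h

theorem tsum_moebius_div_sq : ∑' d : ℕ, (μ d : ℝ) / d ^ 2 = 6 / Real.pi ^ 2 := by
  apply Complex.ofReal_injective
  push_cast
  rw [← LSeries_moebius_two, LSeries]
  refine tsum_congr fun n => ?_
  rcases eq_or_ne n 0 with rfl | hn
  · simp
  · rw [LSeries.term_of_ne_zero hn]
    norm_cast

theorem sum_Icc_floor_totient_sub_eq_add (x : ℝ) :
    ∑ n ∈ Icc 1 ⌊x⌋₊, (n.totient : ℝ) - 3 / Real.pi ^ 2 * x ^ 2 =
      ∑ d ∈ Icc 1 ⌊x⌋₊, (μ d : ℝ) * (∑ m ∈ Icc 1 ⌊x / d⌋₊, (m : ℝ) - (x / d) ^ 2 / 2) +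
        x ^ 2 / 2 * (∑ d ∈ Icc 1 ⌊x⌋₊, (μ d : ℝ) / d ^ 2 - 6 / Real.pi ^ 2) := by
  have hswap (d : ℕ) : (μ d : ℝ) * ((x / d) ^ 2 / 2) = x ^ 2 / 2 * ((μ d : ℝ) / d ^ 2) := by ring
  simp only [sum_Icc_totient_eq_sum_moebius_mul, Nat.floor_div_natCast, mul_sub, sum_sub_distrib,
    hswap, ← mul_sum]
  ring

theorem abs_sum_moebius_mul_sum_floor_sub_le {x : ℝ} (hx : 1 ≤ x) :
    |∑ d ∈ Icc 1 ⌊x⌋₊, (μ d : ℝ) * (∑ m ∈ Icc 1 ⌊x / d⌋₊, (m : ℝ) - (x / d) ^ 2 / 2)| ≤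
      x * (Real.log x + 1) := by
  have hterm : ∀ d ∈ Icc 1 ⌊x⌋₊,
      |(μ d : ℝ) * (∑ m ∈ Icc 1 ⌊x / d⌋₊, (m : ℝ) - (x / d) ^ 2 / 2)| ≤ x * (d : ℝ)⁻¹ := by
    intro d hd
    obtain ⟨hd1, hdN⟩ := mem_Icc.mp hd
    have hxd : 1 ≤ x / d := (one_le_div₀ (by exact_mod_cast hd1)).mpr
      ((Nat.cast_le.mpr hdN).trans (Nat.floor_le (by linarith)))
    calc _ = |(μ d : ℝ)| * |∑ m ∈ Icc 1 ⌊x / d⌋₊, (m : ℝ) - (x / d) ^ 2 / 2| := abs_mul _ _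
      _ ≤ 1 * (x / d) := mul_le_mul (mod_cast abs_moebius_le_one)
          (abs_sum_Icc_floor_sub_sq_div_two_le hxd) (abs_nonneg _) zero_le_one
      _ = x * (d : ℝ)⁻¹ := by rw [one_mul, div_eq_mul_inv]
  calc _ ≤ ∑ d ∈ Icc 1 ⌊x⌋₊, x * (d : ℝ)⁻¹ := (abs_sum_le_sum_abs _ _).trans (sum_le_sum hterm)
    _ = x * harmonic ⌊x⌋₊ := by simp [← mul_sum, harmonic_eq_sum_Icc]
    _ ≤ x * (Real.log x + 1) := by
      rw [add_comm]
      exact mul_le_mul_of_nonneg_left (harmonic_floor_le_one_add_log x hx) (by linarith)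

theorem abs_sq_div_two_mul_sum_moebius_div_sq_sub_le {x : ℝ} (hx : 0 ≤ x) :
    |x ^ 2 / 2 * (∑ d ∈ Icc 1 ⌊x⌋₊, (μ d : ℝ) / d ^ 2 - 6 / Real.pi ^ 2)| ≤ x := by
  have hfloor : x < ⌊x⌋₊ + 1 := Nat.lt_floor_add_one x
  rw [abs_mul, abs_of_nonneg (by positivity), ← tsum_moebius_div_sq, abs_sub_comm]
  calc _ ≤ x ^ 2 / 2 * (2 / (⌊x⌋₊ + 1)) := mul_le_mul_of_nonneg_left
        (abs_tsum_sub_sum_Icc_div_sq_le (fun d => mod_cast abs_moebius_le_one) ⌊x⌋₊)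
        (by positivity)
    _ ≤ x := by
      rw [mul_div_assoc', div_le_iff₀ (by positivity)]
      nlinarith

theorem summatory_phi_asymptotic :
    ∃ C : ℝ, ∀ x : ℝ, 1 ≤ x →
      |(∑ n ∈ Finset.Icc 1 ⌊x⌋₊, (Nat.totient n : ℝ)) - (3 / Real.pi ^ 2) * x ^ 2| ≤
        C * x * (Real.log x + 1) := by
  refine ⟨2, fun x hx => ?_⟩
  rw [sum_Icc_floor_totient_sub_eq_add]
  calc _ ≤ _ := abs_add_le _ _
    _ ≤ x * (Real.log x + 1) + x := add_le_add (abs_sum_moebius_mul_sum_floor_sub_le hx)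
        (abs_sq_div_two_mul_sum_moebius_div_sq_sub_le (by linarith))
    _ ≤ 2 * x * (Real.log x + 1) := by nlinarith [Real.log_nonneg hx]
end
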